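/- arXiv:1308.1868 — 4 statements merged into one kernel-verified Lean document; each statement's English description precedes it below -/
import Mathlib

section
/- Let d ∈ ℝ, 0 < b < 1 and 0 < σ₁ < σ₂ be reals with σ₁²·b + σ₂²·(1−b) = 1. For t > 0 and A > 0 define I(t,A) = e^t · (2π)^{-1} · ∫ over the set of w ∈ ℝ with |w − √2·σ₁·√(bt)| > A and √(2t) − σ₁·√b·w ≥ log t of ( σ₂·√(1−b) / (√(2t) − σ₁·√b·w) ) · exp( −w²/2 − ( √(2t) − σ₁·√b·w − (log t)/(2√2·√t) − d/√t )² / (2·σ₂²·(1−b)) ) dw. Then for every ε > 0 there exists A₀ > 0 such that for all A ≥ A₀, limsup_{t→∞} I(t,A) ≤ ε. -/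
open MeasureTheory Filter

/-- The Gaussian integral appearing in the estimate (R2) of Proposition 2.1. -/
noncomputable def R2Integral (σ₁ σ₂ b d t A : ℝ) : ℝ :=
  Real.exp t * (2 * Real.pi)⁻¹ *
    ∫ w in {w : ℝ | |w - Real.sqrt 2 * σ₁ * Real.sqrt (b * t)| > A ∧
        Real.sqrt (2 * t) - σ₁ * Real.sqrt b * w ≥ Real.log t},
      (σ₂ * Real.sqrt (1 - b) / (Real.sqrt (2 * t) - σ₁ * Real.sqrt b * w)) *
        Real.exp (-(w ^ 2) / 2 -
          (Real.sqrt (2 * t) - σ₁ * Real.sqrt b * w -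
              Real.log t / (2 * Real.sqrt 2 * Real.sqrt t) - d / Real.sqrt t) ^ 2 /
            (2 * σ₂ ^ 2 * (1 - b)))

open Real Topology

/-! With `β = σ₁ √b`, `K = σ₂² (1 - b) = 1 - β²` and `s = √(2t)`, completing the square gives
`w²/2 + (s - βw - m)²/(2K) = (s - m)²/2 + (w - β(s - m))²/(2K)`. The factor `exp (-(s - m)²/2)`
cancels `eᵗ` up to `e^{√2 d} √t`, leaving a Gaussian in `w` of variance `K` centred within `1`
of `βs`. Half of its exponent pays for the prefactor `1 / (s - βw)`: while `w - βs ≤ Ks/(2β)`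
the prefactor is at most `2/(Ks)`, which absorbs `√t`, and outside the window the Gaussian is at
most `exp (-(A - 1)²/(4K))`; beyond `βs + Ks/(2β)` the Gaussian is at most `exp (-Kt/(32β²))`,
which beats `√t / log t`. -/

lemma sq_div_two_add_sq_div_eq {β K : ℝ} (hK : K ≠ 0) (hβK : β ^ 2 = 1 - K) (s m w : ℝ) :
    w ^ 2 / 2 + (s - β * w - m) ^ 2 / (2 * K) =
      (s - m) ^ 2 / 2 + (w - β * (s - m)) ^ 2 / (2 * K) := by
  field_simp
  linear_combination (w ^ 2 - (s - m) ^ 2) * hβK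

lemma inv_mul_exp_le_outside_window {β K s m L A w : ℝ} (hK : 0 < K) (hβ : 0 < β)
    (hβK : β ^ 2 = 1 - K) (hs : 4 * β ≤ K * s) (hm : |β * m| ≤ 1) (hA : 1 ≤ A) (hL : 0 < L)
    (hwA : A < |w - β * s|) (hwL : L ≤ s - β * w) :
    (s - β * w)⁻¹ * exp (-(4 * K)⁻¹ * (w - β * (s - m)) ^ 2) ≤
      2 / (K * s) * exp (-(4 * K)⁻¹ * (A - 1) ^ 2) +
        L⁻¹ * exp (-(4 * K)⁻¹ * (K * s / (4 * β)) ^ 2) := by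
  have hz : w - β * (s - m) = (w - β * s) + β * m := by ring
  have hs0 : 0 < s := by nlinarith
  rcases le_or_gt (w - β * s) (K * s / (2 * β)) with hnear | hfar
  · have hD : K * s / 2 ≤ s - β * w := by
      have : β * (w - β * s) ≤ K * s / 2 := by
        calc β * (w - β * s) ≤ β * (K * s / (2 * β)) := by gcongr
          _ = K * s / 2 := by field_simp
      nlinarith
    have hzA : A - 1 ≤ |w - β * (s - m)| := by
      rw [hz]
      have := abs_add_le (w - β * s + β * m) (-(β * m))
      rw [add_neg_cancel_right, abs_neg] at this
      linarith
    calc (s - β * w)⁻¹ * exp (-(4 * K)⁻¹ * (w - β * (s - m)) ^ 2)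
        ≤ (K * s / 2)⁻¹ * exp (-(4 * K)⁻¹ * (A - 1) ^ 2) := by
          refine mul_le_mul (inv_anti₀ (by positivity) hD) (exp_le_exp.2 ?_) (by positivity)
            (by positivity)
          refine mul_le_mul_of_nonpos_left ?_ (neg_nonpos.2 (by positivity))
          rw [← sq_abs (w - _)]
          gcongr
      _ = 2 / (K * s) * exp (-(4 * K)⁻¹ * (A - 1) ^ 2) := by field_simp
      _ ≤ _ := le_add_of_nonneg_right (by positivity)
  · have hzfar : K * s / (4 * β) ≤ w - β * (s - m) := by
      have h1 : 1 ≤ K * s / (4 * β) := by rw [le_div_iff₀ (by positivity)]; linarith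
      have h2 : K * s / (2 * β) = 2 * (K * s / (4 * β)) := by field_simp; ring
      rw [hz]; linarith [neg_abs_le (β * m)]
    calc (s - β * w)⁻¹ * exp (-(4 * K)⁻¹ * (w - β * (s - m)) ^ 2)
        ≤ L⁻¹ * exp (-(4 * K)⁻¹ * (K * s / (4 * β)) ^ 2) := by
          refine mul_le_mul (inv_anti₀ hL hwL) (exp_le_exp.2 ?_) (by positivity) (by positivity)
          refine mul_le_mul_of_nonpos_left ?_ (neg_nonpos.2 (by positivity))
          gcongr
      _ ≤ _ := le_add_of_nonneg_left (by positivity)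

lemma setIntegral_outside_window_le {β K s m L A c : ℝ} (hK : 0 < K) (hβ : 0 < β)
    (hβK : β ^ 2 = 1 - K) (hs : 4 * β ≤ K * s) (hm : |β * m| ≤ 1) (hA : 1 ≤ A) (hL : 0 < L)
    (hc : 0 ≤ c) :
    ∫ w in {w : ℝ | |w - β * s| > A ∧ s - β * w ≥ L},
        c / (s - β * w) * exp (-(w ^ 2) / 2 - (s - β * w - m) ^ 2 / (2 * K)) ≤
      c * exp (-((s - m) ^ 2 / 2)) *
        (2 / (K * s) * exp (-(4 * K)⁻¹ * (A - 1) ^ 2) +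
          L⁻¹ * exp (-(4 * K)⁻¹ * (K * s / (4 * β)) ^ 2)) * √(π / (4 * K)⁻¹) := by
  set B := 2 / (K * s) * exp (-(4 * K)⁻¹ * (A - 1) ^ 2) +
    L⁻¹ * exp (-(4 * K)⁻¹ * (K * s / (4 * β)) ^ 2)
  have hB : 0 ≤ B := by
    have : 0 < s := by nlinarith
    positivity
  set g := fun w : ℝ => c * exp (-((s - m) ^ 2 / 2)) * B * exp (-(4 * K)⁻¹ * (w - β * (s - m)) ^ 2)
  have hg : Integrable g :=
    ((integrable_exp_neg_mul_sq (by positivity)).comp_sub_right _).const_mul _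
  have hpoint : ∀ w ∈ {w : ℝ | |w - β * s| > A ∧ s - β * w ≥ L},
      c / (s - β * w) * exp (-(w ^ 2) / 2 - (s - β * w - m) ^ 2 / (2 * K)) ≤ g w := by
    rintro w ⟨hwA, hwL⟩
    have hsplit : exp (-(w ^ 2) / 2 - (s - β * w - m) ^ 2 / (2 * K)) = exp (-((s - m) ^ 2 / 2)) *
        exp (-(4 * K)⁻¹ * (w - β * (s - m)) ^ 2) * exp (-(4 * K)⁻¹ * (w - β * (s - m)) ^ 2) := by
      rw [← exp_add, ← exp_add]
      congr 1
      linear_combination -sq_div_two_add_sq_div_eq hK.ne' hβK s m w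
    calc c / (s - β * w) * exp (-(w ^ 2) / 2 - (s - β * w - m) ^ 2 / (2 * K))
        = c * exp (-((s - m) ^ 2 / 2)) * ((s - β * w)⁻¹ * exp (-(4 * K)⁻¹ * (w - β * (s - m)) ^ 2))
          * exp (-(4 * K)⁻¹ * (w - β * (s - m)) ^ 2) := by
          rw [hsplit]; ring
      _ ≤ g w := by
          dsimp only [g]
          gcongr
          exact inv_mul_exp_le_outside_window hK hβ hβK hs hm hA hL hwA hwL
  have hnonneg : ∀ w ∈ {w : ℝ | |w - β * s| > A ∧ s - β * w ≥ L},
      0 ≤ c / (s - β * w) * exp (-(w ^ 2) / 2 - (s - β * w - m) ^ 2 / (2 * K)) := by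
    rintro w ⟨-, hwL⟩
    have : 0 < s - β * w := hL.trans_le hwL
    positivity
  have hS : MeasurableSet {w : ℝ | |w - β * s| > A ∧ s - β * w ≥ L} := by measurability
  calc _ ≤ ∫ w in {w : ℝ | |w - β * s| > A ∧ s - β * w ≥ L}, g w :=
        integral_mono_of_nonneg (ae_restrict_of_forall_mem hS hnonneg) hg.integrableOn
          (ae_restrict_of_forall_mem hS hpoint)
    _ ≤ ∫ w, g w := setIntegral_le_integral hg (ae_of_all _ fun w => by dsimp only [g]; positivity)
    _ = _ := by
        simp only [g, integral_const_mul,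
          integral_sub_right_eq_self (fun x => exp (-(4 * K)⁻¹ * x ^ 2)), integral_gaussian]

lemma exp_mul_exp_neg_sq_le (d : ℝ) {t : ℝ} (ht : 0 < t) :
    exp t * exp (-((√(2 * t) - (log t / (2 * √2 * √t) + d / √t)) ^ 2 / 2)) ≤
      exp (√2 * d) * √t := by
  set m := log t / (2 * √2 * √t) + d / √t
  have hsm : √(2 * t) * m = log t / 2 + √2 * d := by
    have : √t ≠ 0 := (sqrt_pos.2 ht).ne'
    have : √2 ≠ 0 := by positivity
    simp only [m, sqrt_mul' 2 ht.le]
    field_simp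
  have hexp : t - (√(2 * t) - m) ^ 2 / 2 = √(2 * t) * m - m ^ 2 / 2 := by
    linear_combination (-1 / 2 : ℝ) * sq_sqrt (by positivity : (0 : ℝ) ≤ 2 * t)
  calc exp t * exp (-((√(2 * t) - m) ^ 2 / 2)) = exp (√(2 * t) * m - m ^ 2 / 2) := by
        rw [← exp_add, ← hexp, ← sub_eq_add_neg]
    _ ≤ exp (√(2 * t) * m) := exp_le_exp.2 (by linarith [sq_nonneg m])
    _ = exp (√2 * d) * √t := by
        rw [hsm, add_comm, exp_add, sqrt_eq_rpow t, rpow_def_of_pos ht, mul_one_div]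

lemma R2Integral_le {σ₁ σ₂ b d t A β K : ℝ} (hσ₂ : 0 ≤ σ₂) (hβ : σ₁ * √b = β)
    (hK : σ₂ ^ 2 * (1 - b) = K) (hβ0 : 0 < β) (hK0 : 0 < K) (hβK : β ^ 2 = 1 - K)
    (hA : 1 ≤ A) (ht : 1 < t) (hm : |β * (log t / (2 * √2 * √t) + d / √t)| ≤ 1)
    (hs : 4 * β ≤ K * √(2 * t)) :
    R2Integral σ₁ σ₂ b d t A ≤
      (2 * π)⁻¹ * (σ₂ * √(1 - b)) * √(π / (4 * K)⁻¹) * exp (√2 * d) *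
        (√2 / K * exp (-(4 * K)⁻¹ * (A - 1) ^ 2) +
          (log t)⁻¹ * (√t * exp (-(K / (32 * β ^ 2)) * t))) := by
  have ht0 : 0 < t := one_pos.trans ht
  have hst : √(2 * t) = √2 * √t := sqrt_mul' 2 ht0.le
  have hcen : √2 * σ₁ * √(b * t) = β * √(2 * t) := by
    rw [← hβ, sqrt_mul' b ht0.le, hst]; ring
  have hR : R2Integral σ₁ σ₂ b d t A = exp t * (2 * π)⁻¹ *
      ∫ w in {w : ℝ | |w - β * √(2 * t)| > A ∧ √(2 * t) - β * w ≥ log t},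
        σ₂ * √(1 - b) / (√(2 * t) - β * w) * exp (-(w ^ 2) / 2 -
          (√(2 * t) - β * w - (log t / (2 * √2 * √t) + d / √t)) ^ 2 / (2 * K)) := by
    simp only [R2Integral, hcen, hβ, ← hK, sub_sub, mul_assoc, add_assoc]
  have hs0 : 0 < √(2 * t) := by positivity
  have hlog : 0 < log t := log_pos ht
  have hfirst : √t * (2 / (K * √(2 * t))) = √2 / K := by
    rw [hst]
    field_simp
    rw [sq_sqrt zero_le_two]
  have hsecond : -(4 * K)⁻¹ * (K * √(2 * t) / (4 * β)) ^ 2 = -(K / (32 * β ^ 2)) * t := by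
    field_simp
    rw [sq_sqrt (by positivity)]
    ring
  calc R2Integral σ₁ σ₂ b d t A
      ≤ exp t * (2 * π)⁻¹ * (σ₂ * √(1 - b) *
          exp (-((√(2 * t) - (log t / (2 * √2 * √t) + d / √t)) ^ 2 / 2)) *
          (2 / (K * √(2 * t)) * exp (-(4 * K)⁻¹ * (A - 1) ^ 2) +
            (log t)⁻¹ * exp (-(4 * K)⁻¹ * (K * √(2 * t) / (4 * β)) ^ 2)) * √(π / (4 * K)⁻¹)) := by
        rw [hR]
        gcongr
        exact setIntegral_outside_window_le hK0 hβ0 hβK hs hm hA hlog (by positivity)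
    _ = (2 * π)⁻¹ * (σ₂ * √(1 - b)) * √(π / (4 * K)⁻¹) *
          (exp t * exp (-((√(2 * t) - (log t / (2 * √2 * √t) + d / √t)) ^ 2 / 2))) *
          (2 / (K * √(2 * t)) * exp (-(4 * K)⁻¹ * (A - 1) ^ 2) +
            (log t)⁻¹ * exp (-(4 * K)⁻¹ * (K * √(2 * t) / (4 * β)) ^ 2)) := by
        ring
    _ ≤ (2 * π)⁻¹ * (σ₂ * √(1 - b)) * √(π / (4 * K)⁻¹) * (exp (√2 * d) * √t) *
          (2 / (K * √(2 * t)) * exp (-(4 * K)⁻¹ * (A - 1) ^ 2) +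
            (log t)⁻¹ * exp (-(4 * K)⁻¹ * (K * √(2 * t) / (4 * β)) ^ 2)) := by
        gcongr _ * ?_ * _
        exact exp_mul_exp_neg_sq_le d ht0
    _ = _ := by
        rw [hsecond, ← hfirst]
        ring

lemma R2Integral_nonneg {σ₁ σ₂ b d t A : ℝ} (hσ₂ : 0 ≤ σ₂) (ht : 1 < t) :
    0 ≤ R2Integral σ₁ σ₂ b d t A := by
  refine mul_nonneg (by positivity) (setIntegral_nonneg (by measurability) fun w hw => ?_)
  have : 0 < √(2 * t) - σ₁ * √b * w := (log_pos ht).trans_le hw.2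
  positivity

lemma tendsto_log_div_sqrt_add_div_sqrt_atTop (d : ℝ) :
    Tendsto (fun t => log t / (2 * √2 * √t) + d / √t) atTop (𝓝 0) := by
  have hlog : Tendsto (fun t => log t / √t) atTop (𝓝 0) :=
    ((isLittleO_log_rpow_atTop one_half_pos).tendsto_div_nhds_zero).congr fun t => by
      rw [sqrt_eq_rpow]
  have hd : Tendsto (fun t => d / √t) atTop (𝓝 0) :=
    tendsto_const_nhds.div_atTop tendsto_sqrt_atTop
  simpa [div_mul_eq_div_div_swap] using (hlog.div_const (2 * √2)).add hd

lemma tendsto_inv_log_mul_sqrt_mul_exp_neg_atTop {c : ℝ} (hc : 0 < c) :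
    Tendsto (fun t => (log t)⁻¹ * (√t * exp (-c * t))) atTop (𝓝 0) := by
  have h := tendsto_log_atTop.inv_tendsto_atTop.mul
    (tendsto_rpow_mul_exp_neg_mul_atTop_nhds_zero (1 / 2) c hc)
  simpa [sqrt_eq_rpow] using h

lemma exists_limsup_R2Integral_le {σ₁ σ₂ b : ℝ} (hb : 0 < b) (hb1 : b < 1) (hσ₁ : 0 < σ₁)
    (hσ₂ : 0 < σ₂) (hnorm : σ₁ ^ 2 * b + σ₂ ^ 2 * (1 - b) = 1) (d : ℝ) :
    ∃ C c : ℝ, 0 < c ∧ ∀ A ≥ 1,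
      limsup (fun t => R2Integral σ₁ σ₂ b d t A) atTop ≤ C * exp (-c * (A - 1) ^ 2) := by
  set β := σ₁ * √b with hβ
  set K := σ₂ ^ 2 * (1 - b) with hK
  have hβ0 : 0 < β := by positivity
  have hK0 : 0 < K := mul_pos (by positivity) (sub_pos.2 hb1)
  have hβK : β ^ 2 = 1 - K := by rw [mul_pow, sq_sqrt hb.le]; linarith
  set C₀ := (2 * π)⁻¹ * (σ₂ * √(1 - b)) * √(π / (4 * K)⁻¹) * exp (√2 * d)
  refine ⟨C₀ * (√2 / K), (4 * K)⁻¹, by positivity, fun A hA => ?_⟩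
  set bound := fun t => C₀ * (√2 / K * exp (-(4 * K)⁻¹ * (A - 1) ^ 2) +
    (log t)⁻¹ * (√t * exp (-(K / (32 * β ^ 2)) * t)))
  have hbound : ∀ᶠ t in atTop, R2Integral σ₁ σ₂ b d t A ≤ bound t := by
    have hm : Tendsto (fun t => |β * (log t / (2 * √2 * √t) + d / √t)|) atTop (𝓝 0) := by
      simpa using ((tendsto_log_div_sqrt_add_div_sqrt_atTop d).const_mul β).abs
    have hs := tendsto_sqrt_atTop.comp (tendsto_id.const_mul_atTop two_pos)
    filter_upwards [eventually_gt_atTop 1, hm.eventually_le_const one_pos,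
      (hs.const_mul_atTop hK0).eventually_ge_atTop (4 * β)] with t ht htm hts
    exact R2Integral_le hσ₂.le rfl rfl hβ0 hK0 hβK hA ht htm hts
  have hlim : Tendsto bound atTop (𝓝 (C₀ * (√2 / K * exp (-(4 * K)⁻¹ * (A - 1) ^ 2)))) := by
    simpa only [add_zero] using ((tendsto_inv_log_mul_sqrt_mul_exp_neg_atTop
      (by positivity : 0 < K / (32 * β ^ 2))).const_add
      (√2 / K * exp (-(4 * K)⁻¹ * (A - 1) ^ 2))).const_mul C₀
  have hnonneg : ∀ᶠ t in atTop, 0 ≤ R2Integral σ₁ σ₂ b d t A :=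
    (eventually_gt_atTop 1).mono fun t ht => R2Integral_nonneg hσ₂.le ht
  calc limsup (fun t => R2Integral σ₁ σ₂ b d t A) atTop ≤ limsup bound atTop :=
        limsup_le_limsup hbound (isCoboundedUnder_le_of_eventually_le _ hnonneg)
          hlim.isBoundedUnder_le
    _ = _ := by rw [hlim.limsup_eq]; ring

/-- the estimate (R2) in the proof of Proposition 2.1: the recentered
Gaussian integral beyond a window of width `A` is small for `A` large, uniformly in large `t`. -/
theorem stmt_1 (σ₁ σ₂ b d : ℝ) (hb : 0 < b) (hb1 : b < 1) (hσ₁ : 0 < σ₁) (hσ : σ₁ < σ₂)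
    (hnorm : σ₁ ^ 2 * b + σ₂ ^ 2 * (1 - b) = 1) :
    ∀ ε > (0:ℝ), ∃ A₀ > (0:ℝ), ∀ A ≥ A₀,
      Filter.limsup (fun t : ℝ => R2Integral σ₁ σ₂ b d t A) atTop ≤ ε := by
  intro ε hε
  obtain ⟨C, c, hc, hlimsup⟩ :=
    exists_limsup_R2Integral_le hb hb1 hσ₁ (hσ₁.trans hσ) hnorm d
  have htail : Tendsto (fun A : ℝ => C * exp (-c * (A - 1) ^ 2)) atTop (𝓝 0) := by
    have hsq : Tendsto (fun A : ℝ => (A - 1) ^ 2) atTop atTop :=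
      (tendsto_pow_atTop two_ne_zero).comp (tendsto_atTop_add_const_right _ (-1) tendsto_id)
    simpa using (tendsto_exp_atBot.comp (hsq.const_mul_atTop_of_neg (neg_lt_zero.2 hc))).const_mul C
  obtain ⟨A₁, hA₁⟩ := eventually_atTop.1 (htail.eventually_le_const hε)
  exact ⟨max A₁ 1, by positivity, fun A hA =>
    (hlimsup A (le_of_max_le_right hA)).trans (hA₁ A (le_of_max_le_left hA))⟩
end

section
/- Fix r > 0, a > 0 and y₀ ∈ ℝ. Let f : [0,∞) → ℝ be measurable with 0 ≤ f(y) ≤ 1 for all y, and suppose f(y) ≤ e^r · exp( −(y + √2·r)²/(2r) ) · exp( y₀·(y + √2·r)/r ) for all y ≥ 0. Let x : (r,∞) → ℝ be a function with lim_{t→∞} x(t)/t = a. Then lim_{t→∞} ( √t / √(2π(t−r)) ) · e^{x(t)²/(2t)} · ∫_0^∞ f(y) · e^{√2·y} · exp( −(y − x(t))²/(2(t−r)) ) · ( 1 − exp( −2y·( x(t) + (3/(2√2))·log t )/(t−r) ) ) dy = (1/√(2π)) · e^{−a²·r/2} · ∫_0^∞ f(y) · e^{(√2+a)·y} · (1 −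 e^{−2·a·y}) dy. -/
/-!
After pulling the prefactor inside the integral, the integrand is `f y * exp (√2 * y)` times a
kernel `K t y` with `K t y → exp (-a ^ 2 * r / 2) * exp (a * y) * (1 - exp (-2 * a * y)) / √(2π)`.
For large `t` we have `0 ≤ x t` and `x t / (t - r) ≤ 2 * a`, and the Gaussian exponent is at most
`x t * y / (t - r)`, so `0 ≤ K t y ≤ exp (2 * a * y)` for `y ≥ 0`. The Gaussian bound on `f` makes
`f y * exp ((√2 + 2 * a) * y)` integrable, and dominated convergence applies.
-/

open MeasureTheory Filter Topology Real

lemma tendsto_div_sub_const_atTop (r : ℝ) : Tendsto (fun t : ℝ => t / (t - r)) atTop (𝓝 1) := by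
  have h : Tendsto (fun t : ℝ => 1 - r / t) atTop (𝓝 1) := by
    simpa using (tendsto_const_nhds (x := (1 : ℝ))).sub
      ((tendsto_const_nhds (x := r)).div_atTop tendsto_id)
  refine (inv_one (G := ℝ) ▸ h.inv₀ one_ne_zero).congr' ?_
  filter_upwards [eventually_ne_atTop 0] with t ht
  rw [one_sub_div ht, inv_div]

lemma Filter.Tendsto.div_sub_const_atTop {g : ℝ → ℝ} {L : ℝ}
    (hg : Tendsto (fun t => g t / t) atTop (𝓝 L)) (r : ℝ) :
    Tendsto (fun t => g t / (t - r)) atTop (𝓝 L) := by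
  refine (mul_one L ▸ hg.mul (tendsto_div_sub_const_atTop r)).congr' ?_
  filter_upwards [eventually_ne_atTop 0] with t ht
  exact div_mul_div_cancel₀ ht

lemma tendsto_sqrt_div_sqrt_two_pi_mul_sub (r : ℝ) :
    Tendsto (fun t => √t / √(2 * π * (t - r))) atTop (𝓝 (1 / √(2 * π))) := by
  refine (sqrt_one ▸ (tendsto_div_sub_const_atTop r).sqrt).div_const _ |>.congr' ?_
  filter_upwards [eventually_ge_atTop 0] with t ht
  rw [sqrt_div ht, sqrt_mul (x := 2 * π) (by positivity), div_div, mul_comm]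

lemma one_div_sqrt_two_pi_lt_one : 1 / √(2 * π) < 1 := by
  rw [div_lt_one (by positivity), lt_sqrt zero_le_one]
  linarith [pi_gt_three]

lemma tendsto_gaussian_exponent {x : ℝ → ℝ} {a : ℝ}
    (hx : Tendsto (fun t => x t / t) atTop (𝓝 a)) (r y : ℝ) :
    Tendsto (fun t => x t ^ 2 / (2 * t) + -(y - x t) ^ 2 / (2 * (t - r))) atTop
      (𝓝 (-a ^ 2 * r / 2 + a * y)) := by
  have hvanish : Tendsto (fun t => y ^ 2 / 2 / (t - r)) atTop (𝓝 0) :=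
    tendsto_const_nhds.div_atTop (tendsto_atTop_add_const_right _ (-r) tendsto_id)
  have h := ((((hx.pow 2).mul ((tendsto_div_sub_const_atTop r).const_mul r)).div_const 2).neg.add
    ((hx.div_sub_const_atTop r).mul_const y)).sub hvanish
  rw [mul_one, sub_zero, neg_div', ← neg_mul] at h
  refine h.congr' ?_
  filter_upwards [eventually_ne_atTop 0, eventually_ne_atTop r] with t ht htr
  rw [← sub_ne_zero] at htr
  field_simp
  ring

lemma gaussian_exponent_le {r t : ℝ} (hr : 0 ≤ r) (hrt : r < t) (x y : ℝ) :
    x ^ 2 / (2 * t) + -(y - x) ^ 2 / (2 * (t - r)) ≤ x * y / (t - r) := by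
  have htr : 0 < t - r := sub_pos.2 hrt
  have hx2 : x ^ 2 / (2 * t) ≤ x ^ 2 / (2 * (t - r)) := by gcongr; linarith
  have : -(y - x) ^ 2 / (2 * (t - r)) =
      x * y / (t - r) - x ^ 2 / (2 * (t - r)) - y ^ 2 / (2 * (t - r)) := by
    field_simp; ring
  rw [this]
  linarith [show 0 ≤ y ^ 2 / (2 * (t - r)) by positivity]

lemma one_sub_exp_neg_mem_Icc {u : ℝ} (hu : 0 ≤ u) : 1 - exp (-u) ∈ Set.Icc 0 1 :=
  ⟨sub_nonneg.2 (exp_le_one_iff.2 (neg_nonpos.2 hu)), sub_le_self _ (exp_pos _).le⟩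

lemma integrable_exp_neg_mul_sq_add_mul_add {b : ℝ} (hb : 0 < b) (c d : ℝ) :
    Integrable (fun x : ℝ => exp (-b * x ^ 2 + c * x + d)) := by
  refine (integrable_cexp_quadratic (b := b) (by simpa using hb) c d).norm.congr
    (ae_of_all _ fun x => ?_)
  simp [Complex.norm_exp, ← Complex.ofReal_pow]

lemma exp_mul_exp_mul_exp_mul_exp_sqrt_two_eq {r : ℝ} (hr : r ≠ 0) (y₀ y : ℝ) :
    exp r * exp (-(y + √2 * r) ^ 2 / (2 * r)) * exp (y₀ * (y + √2 * r) / r) * exp (√2 * y) =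
      exp (-(2 * r)⁻¹ * y ^ 2 + y₀ / r * y + √2 * y₀) := by
  simp only [← exp_add]
  congr 1
  field_simp
  ring_nf
  rw [sq_sqrt zero_le_two]
  ring

noncomputable def rescaledKernel (r c : ℝ) (x : ℝ → ℝ) (t y : ℝ) : ℝ :=
  √t / √(2 * π * (t - r)) * exp (x t ^ 2 / (2 * t)) * exp (-(y - x t) ^ 2 / (2 * (t - r))) *
    (1 - exp (-(2 * y * ((x t + c * log t) / (t - r)))))

section RescaledKernel

variable {r c a : ℝ} {x : ℝ → ℝ}

lemma rescaledKernel_eq (t y : ℝ) :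
    rescaledKernel r c x t y = √t / √(2 * π * (t - r)) *
      exp (x t ^ 2 / (2 * t) + -(y - x t) ^ 2 / (2 * (t - r))) *
        (1 - exp (-(2 * y * ((x t + c * log t) / (t - r))))) := by
  rw [rescaledKernel, exp_add, mul_assoc (_ / _)]

lemma tendsto_rescaledKernel (hx : Tendsto (fun t => x t / t) atTop (𝓝 a)) (r c y : ℝ) :
    Tendsto (fun t => rescaledKernel r c x t y) atTop
      (𝓝 (1 / √(2 * π) * exp (-a ^ 2 * r / 2 + a * y) * (1 - exp (-(2 * y * a))))) := by
  have hdrift : Tendsto (fun t => (x t + c * log t) / (t - r)) atTop (𝓝 a) := by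
    refine Tendsto.div_sub_const_atTop ?_ r
    have hlog := isLittleO_log_id_atTop.tendsto_div_nhds_zero.const_mul c
    refine add_zero a ▸ mul_zero c ▸ (hx.add hlog) |>.congr fun t => ?_
    simp only [id, add_div, mul_div_assoc]
  simp only [rescaledKernel_eq]
  exact ((tendsto_sqrt_div_sqrt_two_pi_mul_sub r).mul (tendsto_gaussian_exponent hx r y).rexp).mul
    (tendsto_const_nhds.sub ((hdrift.const_mul (2 * y)).neg.rexp))

lemma eventually_rescaledKernel_mem_Icc (hr : 0 ≤ r) (hc : 0 ≤ c) (ha : 0 < a)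
    (hx : Tendsto (fun t => x t / t) atTop (𝓝 a)) :
    ∀ᶠ t in atTop, ∀ y, 0 ≤ y → rescaledKernel r c x t y ∈ Set.Icc 0 (exp (2 * a * y)) := by
  filter_upwards [eventually_gt_atTop (max 1 r), hx.eventually (lt_mem_nhds ha),
    (hx.div_sub_const_atTop r).eventually_le_const (by linarith : a < 2 * a),
    (tendsto_sqrt_div_sqrt_two_pi_mul_sub r).eventually_le_const one_div_sqrt_two_pi_lt_one]
    with t ht hxt hx2a hpre y hy
  obtain ⟨ht1, hrt⟩ := max_lt_iff.1 ht
  have htr : 0 < t - r := sub_pos.2 hrt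
  have hxt : 0 < x t := (div_pos_iff_of_pos_right (by linarith)).1 hxt
  have hm := one_sub_exp_neg_mem_Icc (u := 2 * y * ((x t + c * log t) / (t - r)))
    (by have := log_nonneg ht1.le; positivity)
  have hE : x t ^ 2 / (2 * t) + -(y - x t) ^ 2 / (2 * (t - r)) ≤ 2 * a * y :=
    (gaussian_exponent_le hr hrt _ _).trans (by rw [mul_div_right_comm]; gcongr)
  rw [rescaledKernel_eq]
  refine ⟨mul_nonneg (by positivity) hm.1, ?_⟩
  calc _ = (√t / √(2 * π * (t - r)) * (1 - exp (-(2 * y * ((x t + c * log t) / (t - r)))))) *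
        exp (x t ^ 2 / (2 * t) + -(y - x t) ^ 2 / (2 * (t - r))) := by ring
    _ ≤ 1 * exp (2 * a * y) := by gcongr; exact mul_le_one₀ hpre hm.1 hm.2
    _ = exp (2 * a * y) := one_mul _

end RescaledKernel

theorem stmt_3_general (r a y₀ : ℝ) (hr : 0 < r) (ha : 0 < a)
    (f : ℝ → ℝ) (hf_meas : Measurable f)
    (hf0 : ∀ y, 0 ≤ y → 0 ≤ f y)
    (hf_dom : ∀ y, 0 ≤ y →
      f y ≤ Real.exp r * Real.exp (-(y + Real.sqrt 2 * r) ^ 2 / (2 * r)) *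
        Real.exp (y₀ * (y + Real.sqrt 2 * r) / r))
    (x : ℝ → ℝ) (hx : Tendsto (fun t => x t / t) atTop (nhds a)) :
    Tendsto (fun t =>
        (Real.sqrt t / Real.sqrt (2 * Real.pi * (t - r))) * Real.exp (x t ^ 2 / (2 * t)) *
          ∫ y in Set.Ioi (0:ℝ),
            f y * Real.exp (Real.sqrt 2 * y) * Real.exp (-(y - x t) ^ 2 / (2 * (t - r))) *
              (1 - Real.exp (-(2 * y * ((x t + (3 / (2 * Real.sqrt 2)) * Real.log t) / (t - r))))))
      atTop
      (nhds ((1 / Real.sqrt (2 * Real.pi)) * Real.exp (-a ^ 2 * r / 2) *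
        ∫ y in Set.Ioi (0:ℝ),
          f y * Real.exp ((Real.sqrt 2 + a) * y) * (1 - Real.exp (-(2 * a * y))))) := by
  set c : ℝ := 3 / (2 * √2)
  have hK := eventually_rescaledKernel_mem_Icc hr.le (by positivity : 0 ≤ c) ha hx
  simp only [← integral_const_mul]
  refine tendsto_integral_filter_of_dominated_convergence
    (fun y => exp (-(2 * r)⁻¹ * y ^ 2 + (y₀ / r + 2 * a) * y + √2 * y₀)) ?_ ?_
    (integrable_exp_neg_mul_sq_add_mul_add (by positivity) _ _).restrict ?_
  · exact Eventually.of_forall fun t => (by fun_prop : Measurable _).aestronglyMeasurable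
  · filter_upwards [hK] with t hKt
    refine (ae_restrict_iff' measurableSet_Ioi).2 (ae_of_all _ fun y (hy : 0 < y) => ?_)
    obtain ⟨hK0, hK1⟩ := hKt y hy.le
    have hfy := hf0 y hy.le
    calc ‖_‖ = ‖f y * exp (√2 * y) * rescaledKernel r c x t y‖ := by
          rw [rescaledKernel]
          congr 1
          ring
      _ = f y * exp (√2 * y) * rescaledKernel r c x t y :=
          norm_of_nonneg (mul_nonneg (mul_nonneg hfy (exp_pos _).le) hK0)
      _ ≤ exp r * exp (-(y + √2 * r) ^ 2 / (2 * r)) * exp (y₀ * (y + √2 * r) / r) *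
            exp (√2 * y) * exp (2 * a * y) := by
          gcongr
          exact hf_dom y hy.le
      _ = _ := by
          rw [exp_mul_exp_mul_exp_mul_exp_sqrt_two_eq hr.ne', ← exp_add]
          congr 1
          ring
  · refine ae_of_all _ fun y => ?_
    convert (tendsto_rescaledKernel hx r c y).const_mul (f y * exp (√2 * y)) using 2
    · rw [rescaledKernel]
      ring
    · rw [add_mul, exp_add, exp_add, mul_right_comm 2 y a]
      ring

/-- the dominated-convergence computation of Lemma 3.2 of the paper. -/
theorem stmt_3 (r a y₀ : ℝ) (hr : 0 < r) (ha : 0 < a)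
    (f : ℝ → ℝ) (hf_meas : Measurable f)
    (hf0 : ∀ y, 0 ≤ y → 0 ≤ f y) (hf1 : ∀ y, 0 ≤ y → f y ≤ 1)
    (hf_dom : ∀ y, 0 ≤ y →
      f y ≤ Real.exp r * Real.exp (-(y + Real.sqrt 2 * r) ^ 2 / (2 * r)) *
        Real.exp (y₀ * (y + Real.sqrt 2 * r) / r))
    (x : ℝ → ℝ) (hx : Tendsto (fun t => x t / t) atTop (nhds a)) :
    Tendsto (fun t =>
        (Real.sqrt t / Real.sqrt (2 * Real.pi * (t - r))) * Real.exp (x t ^ 2 / (2 * t)) *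
          ∫ y in Set.Ioi (0:ℝ),
            f y * Real.exp (Real.sqrt 2 * y) * Real.exp (-(y - x t) ^ 2 / (2 * (t - r))) *
              (1 - Real.exp (-(2 * y * ((x t + (3 / (2 * Real.sqrt 2)) * Real.log t) / (t - r))))))
      atTop
      (nhds ((1 / Real.sqrt (2 * Real.pi)) * Real.exp (-a ^ 2 * r / 2) *
        ∫ y in Set.Ioi (0:ℝ),
          f y * Real.exp ((Real.sqrt 2 + a) * y) * (1 - Real.exp (-(2 * a * y))))) :=
  stmt_3_general r a y₀ hr ha f hf_meas hf0 hf_dom x hx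
end

section
/- Let a > 0 and C ∈ ℝ, and for each t > 0 let g_t : [0,∞) → ℝ be measurable with 0 ≤ g_t(z) ≤ 1 for all z ≥ 0. If lim_{t→∞} ∫_0^∞ g_t(z) · e^{(√2+a)·z} · e^{−a²·t/2} · (1 − e^{−2·a·z}) dz = C, then also lim_{t→∞} ∫_0^∞ g_t(z) · e^{(√2+a)·z} · e^{−a²·t/2} dz = C. -/
open MeasureTheory Filter Topology Set

/-!
Write `f = g t · e^{(√2+a)z} · e^{-a²t/2}` and `φ(z) = e^{-2az}`; the two integrals differ by
`∫ f φ ≥ 0`. Given `ε > 0`, pick `K` with `φ ≤ ε (1 - φ)` on `[K, ∞)`. Then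
`f φ ≤ ε f (1 - φ) + e^{(√2+a)K} e^{-a²t/2} 𝟙_{z ≤ K}`, so the difference is at most `ε ∫ f (1 - φ)` plus
a multiple of `e^{-a²t/2}`, whose limsup is `ε C`. The same bound shows that `f` is integrable as
soon as `f (1 - φ)` is, so Bochner's junk value `0` for non-integrable functions does no harm.
-/

section WeightedIntegral

variable {α : Type*} [MeasurableSpace α] {μ : Measure α} {f φ r : α → ℝ} {ε : ℝ}

lemma integrable_mul_one_sub_of_integrable (hf : Integrable f μ)
    (hφ : AEStronglyMeasurable φ μ) (hφ0 : 0 ≤ᵐ[μ] φ) (hφ1 : φ ≤ᵐ[μ] 1) :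
    Integrable (fun x => f x * (1 - φ x)) μ := by
  refine hf.mono (hf.aestronglyMeasurable.mul (aestronglyMeasurable_const.sub hφ)) ?_
  filter_upwards [hφ0, hφ1] with x h0 h1
  simp only [Pi.zero_apply, Pi.one_apply] at h0 h1
  rw [norm_mul]
  exact mul_le_of_le_one_right (norm_nonneg _)
    (by rw [Real.norm_eq_abs, abs_le]; constructor <;> linarith)

lemma integrable_of_integrable_mul_one_sub (hfφ : Integrable (fun x => f x * (1 - φ x)) μ)
    (hf : AEStronglyMeasurable f μ) (hr : Integrable r μ)
    (hf0 : 0 ≤ᵐ[μ] f) (hbound : ∀ᵐ x ∂μ, f x * φ x ≤ ε * (f x * (1 - φ x)) + r x) :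
    Integrable f μ := by
  refine ((hfφ.const_mul (1 + ε)).add hr).mono' hf ?_
  filter_upwards [hf0, hbound] with x hfx hx
  rw [Real.norm_eq_abs, abs_of_nonneg hfx, Pi.add_apply]
  linarith [show f x = f x * (1 - φ x) + f x * φ x by ring]

theorem integral_sub_integral_mul_one_sub_mem_Icc (hf : AEStronglyMeasurable f μ)
    (hφ : AEStronglyMeasurable φ μ) (hr : Integrable r μ) (hf0 : 0 ≤ᵐ[μ] f)
    (hφ0 : 0 ≤ᵐ[μ] φ) (hφ1 : φ ≤ᵐ[μ] 1) (hr0 : 0 ≤ᵐ[μ] r)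
    (hbound : ∀ᵐ x ∂μ, f x * φ x ≤ ε * (f x * (1 - φ x)) + r x) :
    ∫ x, f x ∂μ - ∫ x, f x * (1 - φ x) ∂μ ∈
      Icc 0 (ε * ∫ x, f x * (1 - φ x) ∂μ + ∫ x, r x ∂μ) := by
  by_cases hfφ : Integrable (fun x => f x * (1 - φ x)) μ
  · have hfi := integrable_of_integrable_mul_one_sub hfφ hf hr hf0 hbound
    have hdiff : ∫ x, f x ∂μ - ∫ x, f x * (1 - φ x) ∂μ = ∫ x, f x * φ x ∂μ := by
      rw [← integral_sub hfi hfφ]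
      congr 1 with x
      ring
    rw [hdiff, ← integral_const_mul, ← integral_add (hfφ.const_mul ε) hr]
    refine ⟨integral_nonneg_of_ae ?_, integral_mono_ae ?_ ((hfφ.const_mul ε).add hr) hbound⟩
    · filter_upwards [hf0, hφ0] with x hfx hφx using mul_nonneg hfx hφx
    · exact (hfi.sub hfφ).congr (Eventually.of_forall fun x => by simp only [Pi.sub_apply]; ring)
  · have hfi : ¬ Integrable f μ := fun h =>
      hfφ (integrable_mul_one_sub_of_integrable h hφ hφ0 hφ1)
    rw [integral_undef hfi, integral_undef hfφ]
    simpa using integral_nonneg_of_ae hr0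

end WeightedIntegral

lemma tendsto_of_sub_le_mul_add {ι : Type*} {l : Filter ι} {F G : ι → ℝ} {C : ℝ}
    (hF : Tendsto F l (𝓝 C))
    (h : ∀ ε > 0, ∃ r : ι → ℝ, Tendsto r l (𝓝 0) ∧
      ∀ᶠ t in l, G t - F t ∈ Icc 0 (ε * F t + r t)) :
    Tendsto G l (𝓝 C) := by
  suffices hGF : Tendsto (fun t => G t - F t) l (𝓝 0) by
    simpa using hGF.add hF
  refine tendsto_order.2 ⟨fun δ hδ => ?_, fun δ hδ => ?_⟩
  · obtain ⟨r, -, hr⟩ := h 1 one_pos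
    filter_upwards [hr] with t ht using hδ.trans_le ht.1
  · have hC : 0 < |C| + 1 := by positivity
    obtain ⟨r, hr, hGF⟩ := h (δ / (2 * (|C| + 1))) (by positivity)
    filter_upwards [hGF, hr.eventually (eventually_lt_nhds (half_pos hδ)),
      hF.eventually (eventually_lt_nhds (lt_of_le_of_lt (le_abs_self C) (lt_add_one _)))]
      with t ht hrt hFt
    have hεF : δ / (2 * (|C| + 1)) * F t ≤ δ / 2 := by
      calc δ / (2 * (|C| + 1)) * F t ≤ δ / (2 * (|C| + 1)) * (|C| + 1) := by gcongr
        _ = δ / 2 := by field_simp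
    linarith [ht.2]

lemma exists_exp_neg_le_mul_one_sub {c ε : ℝ} (hc : 0 < c) (hε : 0 < ε) :
    ∃ K, ∀ z ≥ K, Real.exp (-(c * z)) ≤ ε * (1 - Real.exp (-(c * z))) := by
  have hlim : Tendsto (fun z => Real.exp (-(c * z))) atTop (𝓝 0) :=
    Real.tendsto_exp_neg_atTop_nhds_zero.comp (tendsto_id.const_mul_atTop hc)
  obtain ⟨K, hK⟩ := eventually_atTop.1
    (hlim.eventually (eventually_le_nhds (show 0 < ε / (1 + ε) by positivity)))
  refine ⟨K, fun z hz => ?_⟩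
  have := hK z hz
  rw [le_div_iff₀ (by positivity)] at this
  linarith

lemma mul_exp_neg_le_add_indicator {b c ε K s y z : ℝ} (hb : 0 ≤ b) (hc : 0 ≤ c) (hε : 0 ≤ ε)
    (hs : 0 ≤ s) (hz : 0 ≤ z) (hy0 : 0 ≤ y) (hy1 : y ≤ 1)
    (hK : ∀ z ≥ K, Real.exp (-(c * z)) ≤ ε * (1 - Real.exp (-(c * z)))) :
    y * Real.exp (b * z) * s * Real.exp (-(c * z)) ≤
      ε * (y * Real.exp (b * z) * s * (1 - Real.exp (-(c * z)))) +
        (Iic K).indicator (fun _ => Real.exp (b * K) * s) z := by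
  have hφ1 : Real.exp (-(c * z)) ≤ 1 := Real.exp_le_one_iff.2 (by nlinarith)
  have hf0 : 0 ≤ y * Real.exp (b * z) * s := by positivity
  by_cases hzK : z ≤ K
  · rw [indicator_of_mem (mem_Iic.2 hzK)]
    have hexp : Real.exp (b * z) ≤ Real.exp (b * K) := Real.exp_le_exp.2 (by nlinarith)
    have hfK : y * Real.exp (b * z) * s ≤ Real.exp (b * K) * s := by
      gcongr
      exact mul_le_of_le_one_left (Real.exp_pos _).le hy1 |>.trans hexp
    have : 0 ≤ ε * (y * Real.exp (b * z) * s * (1 - Real.exp (-(c * z)))) :=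
      mul_nonneg hε (mul_nonneg hf0 (by linarith))
    nlinarith [mul_le_mul hfK hφ1 (Real.exp_pos _).le (by positivity)]
  · rw [indicator_of_notMem (by simpa using hzK), add_zero, mul_left_comm]
    exact mul_le_mul_of_nonneg_left (hK z (le_of_not_ge hzK)) hf0

/-- the identity (fz.10) in Proposition 6.2 of the paper: the factor
`1 - e^{-2az}` may be dropped without changing the limit. -/
theorem stmt_5 (a C : ℝ) (ha : 0 < a) (g : ℝ → ℝ → ℝ)
    (hg_meas : ∀ t, 0 < t → Measurable (g t))
    (hg0 : ∀ t, 0 < t → ∀ z, 0 ≤ z → 0 ≤ g t z)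
    (hg1 : ∀ t, 0 < t → ∀ z, 0 ≤ z → g t z ≤ 1)
    (hlim : Tendsto (fun t =>
        ∫ z in Set.Ioi (0:ℝ),
          g t z * Real.exp ((Real.sqrt 2 + a) * z) * Real.exp (-a ^ 2 * t / 2) *
            (1 - Real.exp (-(2 * a * z))))
      atTop (nhds C)) :
    Tendsto (fun t =>
        ∫ z in Set.Ioi (0:ℝ),
          g t z * Real.exp ((Real.sqrt 2 + a) * z) * Real.exp (-a ^ 2 * t / 2))
      atTop (nhds C) := by
  refine tendsto_of_sub_le_mul_add hlim fun ε hε => ?_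
  obtain ⟨K, hK⟩ := exists_exp_neg_le_mul_one_sub (by positivity : 0 < 2 * a) hε
  set μ := volume.restrict (Ioi (0 : ℝ))
  have hdecay : Tendsto (fun t : ℝ => Real.exp (-a ^ 2 * t / 2)) atTop (𝓝 0) :=
    Real.tendsto_exp_atBot.comp <| (tendsto_id.const_mul_atTop_of_neg
      (by nlinarith : -a ^ 2 < 0)).atBot_div_const two_pos
  refine ⟨fun t => μ.real (Iic K) • (Real.exp ((Real.sqrt 2 + a) * K) * Real.exp (-a ^ 2 * t / 2)),
    by simpa using (hdecay.const_mul _).const_mul (μ.real (Iic K)), ?_⟩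
  filter_upwards [eventually_gt_atTop 0] with t ht
  rw [← integral_indicator_const _ measurableSet_Iic]
  refine integral_sub_integral_mul_one_sub_mem_Icc (by fun_prop) (by fun_prop) ?_ ?_ ?_ ?_ ?_ ?_
  · refine (integrable_indicator_iff measurableSet_Iic).2 (integrableOn_const ?_)
    rw [Measure.restrict_apply measurableSet_Iic, inter_comm, Ioi_inter_Iic]
    exact measure_Ioc_lt_top.ne
  all_goals filter_upwards [ae_restrict_mem measurableSet_Ioi] with z (hz : 0 < z)
  · have := hg0 t ht z hz.le
    positivity
  · positivity
  · exact Real.exp_le_one_iff.2 (by nlinarith)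
  · exact indicator_nonneg (fun _ _ => by positivity) z
  · exact mul_exp_neg_le_add_indicator (by positivity) (by positivity) hε.le (by positivity) hz.le
      (hg0 t ht z hz.le) (hg1 t ht z hz.le) hK
end

section
/- Let 0 < σ₁ < 1 and A > 0. Then lim_{s→∞} e^{s − 2s(1+σ₁²)} · (2π)^{−1/2} · ∫_{√(2s)·σ₁ − A/σ₁}^{√(2s)·σ₁ + A/σ₁} exp( 2·√(2s)·σ₁·x − x²/2 ) dx = 0. -/
open MeasureTheory Filter Real Set

/-! Completing the square, `2 c x - x² / 2 ≤ c x + c² / 2`, so on the window `[c - a, c + a]`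
around `c = σ₁ √(2 s)` the integrand is at most `exp (3 c² / 2 + a c)`. Since `c² = 2 σ₁² s`,
the whole expression is `O(exp (-(1 - σ₁²) s + a σ₁ √(2 s)))`, which tends to `0` because
`σ₁ < 1`. -/

theorem tendsto_neg_mul_add_mul_sqrt_atBot {k : ℝ} (hk : 0 < k) (b : ℝ) :
    Tendsto (fun s => -k * s + b * √s) atTop atBot := by
  have hfactor : Tendsto (fun s => √s * (b + -k * √s)) atTop atBot :=
    tendsto_sqrt_atTop.atTop_mul_atBot₀ <| tendsto_atBot_add_const_left _ b <|
      (tendsto_const_mul_atBot_of_neg (neg_neg_of_pos hk)).mpr tendsto_sqrt_atTop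
  refine hfactor.congr' ?_
  filter_upwards [eventually_ge_atTop 0] with s hs
  linear_combination (-k) * mul_self_sqrt hs

theorem setIntegral_Icc_exp_two_mul_sub_sq_div_two_le {c a : ℝ} (hc : 0 ≤ c) (ha : 0 ≤ a) :
    ∫ x in Icc (c - a) (c + a), exp (2 * c * x - x ^ 2 / 2) ≤
      2 * a * exp (3 * c ^ 2 / 2 + c * a) := by
  have hbound : ∀ x ∈ Icc (c - a) (c + a),
      ‖exp (2 * c * x - x ^ 2 / 2)‖ ≤ exp (3 * c ^ 2 / 2 + c * a) := by
    rintro x ⟨-, hx⟩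
    rw [norm_of_nonneg (exp_pos _).le, exp_le_exp]
    nlinarith [sq_nonneg (x - c), mul_le_mul_of_nonneg_left hx hc]
  calc _ ≤ ‖∫ x in Icc (c - a) (c + a), exp (2 * c * x - x ^ 2 / 2)‖ := le_norm_self _
    _ ≤ exp (3 * c ^ 2 / 2 + c * a) * volume.real (Icc (c - a) (c + a)) :=
        norm_setIntegral_le_of_norm_le_const measure_Icc_lt_top hbound
    _ = _ := by rw [volume_real_Icc_of_le (by linarith)]; ring

/-- the diagonal term (T1) in the second-moment computation for the
truncated McKean martingale (proof of Proposition 4.2 of the paper) tends to zero. -/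
theorem stmt_8 (σ₁ : ℝ) (h0 : 0 < σ₁) (h1 : σ₁ < 1) (A : ℝ) (hA : 0 < A) :
    Tendsto (fun s : ℝ =>
        Real.exp (s - 2 * s * (1 + σ₁ ^ 2)) * (1 / Real.sqrt (2 * Real.pi)) *
          ∫ x in Set.Icc (Real.sqrt (2 * s) * σ₁ - A / σ₁) (Real.sqrt (2 * s) * σ₁ + A / σ₁),
            Real.exp (2 * Real.sqrt (2 * s) * σ₁ * x - x ^ 2 / 2))
      atTop (nhds 0) := by
  set a := A / σ₁
  have ha : 0 < a := div_pos hA h0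
  have hlim := (tendsto_exp_atBot.comp (tendsto_neg_mul_add_mul_sqrt_atBot (k := 1 - σ₁ ^ 2)
    (by nlinarith) (a * σ₁ * √2))).const_mul (1 / √(2 * π) * (2 * a))
  rw [mul_zero] at hlim
  refine squeeze_zero' (Eventually.of_forall fun s => ?_) ?_ hlim
  · positivity
  filter_upwards [eventually_ge_atTop 0] with s hs
  have hc2 : (√(2 * s) * σ₁) ^ 2 = 2 * s * σ₁ ^ 2 := by rw [mul_pow, sq_sqrt (by linarith)]
  simp only [mul_assoc 2 (√(2 * s)) σ₁]
  calc _ ≤ exp (s - 2 * s * (1 + σ₁ ^ 2)) * (1 / √(2 * π)) *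
        (2 * a * exp (3 * (√(2 * s) * σ₁) ^ 2 / 2 + √(2 * s) * σ₁ * a)) := by
        gcongr
        exact setIntegral_Icc_exp_two_mul_sub_sq_div_two_le (by positivity) ha.le
    _ = 1 / √(2 * π) * (2 * a) * (exp (s - 2 * s * (1 + σ₁ ^ 2)) *
        exp (3 * (√(2 * s) * σ₁) ^ 2 / 2 + √(2 * s) * σ₁ * a)) := by ring
    _ = _ := by
        rw [← exp_add]
        congr 2
        linear_combination (3 / 2) * hc2 + a * σ₁ * sqrt_mul zero_le_two s
end
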